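/- arXiv:2503.00255 — 9 statements merged into one kernel-verified Lean document; each statement's English description precedes it below -/
import Mathlib

section
/- Let ι be a finite type and f : ι → ℝ. (1) For every p : ι → ℝ with p i ≥ 0 for all i and Σᵢ p i = 1, and every w : ι → ℝ such that p i * w i = f i for all i, one has (Σᵢ |f i|)² ≤ Σᵢ p i * (w i)². (2) Moreover, if f is not identically zero, then setting F = Σⱼ |f j|, p i = |f i| / F and w i = sign(f i) · F, one has p i ≥ 0, Σᵢ p i = 1, p i * w i = f i for all i, and Σᵢ p i * (w i)² = F². -/
/-! Since `|f i| = p i * |w i|`, the sum `∑ i, |f i|` is the `p`-mean of `|w|`, and Jensen's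
inequality for `x ↦ x ^ 2` bounds its square by the second moment. The choice `p ∝ |f|` makes
`|w|` constant, equal to `∑ j, |f j|`, so Jensen's inequality is an equality there. -/

open Finset

namespace Real

lemma sign_mul_abs (x : ℝ) : sign x * |x| = x := by
  rcases lt_trichotomy x 0 with h | rfl | h
  · rw [sign_of_neg h, abs_of_neg h]; ring
  · simp
  · rw [sign_of_pos h, abs_of_pos h]; ring

lemma abs_mul_sign_sq (x : ℝ) : |x| * sign x ^ 2 = |x| := by
  rcases lt_trichotomy x 0 with h | rfl | h
  · rw [sign_of_neg h]; ring
  · simp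
  · rw [sign_of_pos h]; ring

lemma abs_div_mul_sign_mul (x : ℝ) {c : ℝ} (hc : c ≠ 0) : |x| / c * (sign x * c) = x := by
  field_simp
  rw [mul_comm, sign_mul_abs]

lemma abs_div_mul_sign_mul_sq (x : ℝ) {c : ℝ} (hc : c ≠ 0) :
    |x| / c * (sign x * c) ^ 2 = |x| * c := by
  field_simp
  rw [abs_mul_sign_sq]

end Real

lemma sq_sum_mul_le_sum_mul_sq {ι : Type*} (s : Finset ι) {p : ι → ℝ} (x : ι → ℝ)
    (hp : ∀ i ∈ s, 0 ≤ p i) (hp_sum : ∑ i ∈ s, p i = 1) :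
    (∑ i ∈ s, p i * x i) ^ 2 ≤ ∑ i ∈ s, p i * x i ^ 2 :=
  (even_two.convexOn_pow (𝕜 := ℝ)).map_sum_le hp hp_sum fun _ _ => Set.mem_univ _

lemma sq_sum_abs_le_sum_mul_sq {ι : Type*} [Fintype ι] {f p w : ι → ℝ}
    (hp : ∀ i, 0 ≤ p i) (hp_sum : ∑ i, p i = 1) (hpw : ∀ i, p i * w i = f i) :
    (∑ i, |f i|) ^ 2 ≤ ∑ i, p i * w i ^ 2 := by
  have hf : ∀ i, |f i| = p i * |w i| := fun i => by
    rw [← hpw i, abs_mul, abs_of_nonneg (hp i)]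
  simpa only [hf, sq_abs] using
    sq_sum_mul_le_sum_mul_sq univ (fun i => |w i|) (fun i _ => hp i) hp_sum

lemma sum_abs_pos_of_ne_zero {ι : Type*} [Fintype ι] {f : ι → ℝ} (hf : f ≠ 0) :
    0 < ∑ i, |f i| := by
  obtain ⟨i, hi⟩ := Function.ne_iff.mp hf
  exact sum_pos' (fun j _ => abs_nonneg (f j)) ⟨i, mem_univ i, abs_pos.mpr hi⟩

/-- Optimality of the importance-sampling distribution `p i ∝ |f i|` for
generalized direct fidelity estimation: (1) any valid sampling scheme has
second moment at least `(∑ i, |f i|)²`; (2) the choice `p i = |f i| / F`,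
`w i = sign (f i) · F` with `F = ∑ j, |f j|` is valid and attains it. -/
theorem stmt1 {ι : Type*} [Fintype ι] (f : ι → ℝ) :
    (∀ p w : ι → ℝ, (∀ i, 0 ≤ p i) → (∑ i, p i) = 1 →
      (∀ i, p i * w i = f i) →
      (∑ i, |f i|) ^ 2 ≤ ∑ i, p i * (w i) ^ 2) ∧
    (f ≠ 0 →
      (∀ i, 0 ≤ |f i| / (∑ j, |f j|)) ∧
      (∑ i, |f i| / (∑ j, |f j|)) = 1 ∧
      (∀ i, (|f i| / (∑ j, |f j|)) * (Real.sign (f i) * (∑ j, |f j|)) = f i) ∧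
      (∑ i, (|f i| / (∑ j, |f j|)) * (Real.sign (f i) * (∑ j, |f j|)) ^ 2)
        = (∑ j, |f j|) ^ 2) := by
  refine ⟨fun p w hp hp_sum hpw => sq_sum_abs_le_sum_mul_sq hp hp_sum hpw, fun hf => ?_⟩
  have hF : 0 < ∑ j, |f j| := sum_abs_pos_of_ne_zero hf
  refine ⟨fun i => div_nonneg (abs_nonneg _) hF.le, ?_,
    fun i => Real.abs_div_mul_sign_mul (f i) hF.ne', ?_⟩
  · rw [← sum_div, div_self hF.ne']
  · simp only [Real.abs_div_mul_sign_mul_sq _ hF.ne']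
    rw [← sum_mul, sq]
end

section
/- Let n ≥ 1 and let N be a seminorm on the space of n × n complex matrices viewed as a real vector space. Let d ≥ 1, let ψ : Fin d → ℂⁿ be a family of vectors, α : Fin d → ℂ coefficients, and x = Σ_a α_a • ψ_a. Then N(x x*) ≤ Σ_a |α_a|² · N(ψ_a ψ_a*) + Σ_{a < b} ( |Re(α_a · conj(α_b))| · N(ψ_a ψ_b* + ψ_b ψ_a*) + |Im(α_a · conj(α_b))| · N(i • (ψ_a ψ_b*) − i • (ψ_b ψ_a*)) ). -/
open Finset

/-- The outer product `u v*` of two vectors, with entries `u j * conj (v k)`. -/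
noncomputable def outerProd {k : Type*} [Fintype k] (u v : k → ℂ) : Matrix k k ℂ :=
  Matrix.vecMulVec u (star v)

/-!
Expanding `x x*` bilinearly gives `∑ a b, α a conj (α b) • ψ a ψ b*`. The diagonal terms are
`|α a|² • ψ a ψ a*`, and for `a < b` the terms `(a, b)` and `(b, a)` pair up as
`c • M + conj c • M*` with `c = α a conj (α b)` and `M = ψ a ψ b*`, which equals
`Re c • (M + M*) + Im c • (i M - i M*)`: a real combination of two Hermitian matrices.
The triangle inequality and real homogeneity of the seminorm then give the bound.
-/

open ComplexConjugate

theorem Finset.sum_sum_eq_sum_add_sum_sum_Ioi {ι M : Type*} [Fintype ι] [LinearOrder ι]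
    [LocallyFiniteOrderTop ι] [LocallyFiniteOrderBot ι] [AddCommMonoid M] (f : ι → ι → M) :
    ∑ a, ∑ b, f a b = ∑ a, f a a + ∑ a, ∑ b ∈ Ioi a, (f a b + f b a) := by
  classical
  rw [Finset.sum_sum_Ioi_add_eq_sum_sum_off_diag (fun a b => f b a), ← sum_add_distrib]
  exact sum_congr rfl fun a _ => Fintype.sum_eq_add_sum_compl a (f a)

theorem outerProd_sum_smul_sum {k ι κ : Type*} [Fintype k] [Fintype ι] [Fintype κ]
    (α : ι → ℂ) (ψ : ι → k → ℂ) (β : κ → ℂ) (φ : κ → k → ℂ) :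
    outerProd (∑ a, α a • ψ a) (∑ b, β b • φ b) =
      ∑ a, ∑ b, (α a * conj (β b)) • outerProd (ψ a) (φ b) := by
  ext i j
  simp only [outerProd, Matrix.vecMulVec_apply, Matrix.sum_apply, Matrix.smul_apply,
    Pi.star_apply, Finset.sum_apply, Pi.smul_apply, smul_eq_mul, star_sum, sum_mul_sum,
    star_mul', starRingEnd_apply]
  exact sum_congr rfl fun a _ => sum_congr rfl fun b _ => by ring

theorem smul_add_conj_smul_eq {E : Type*} [AddCommGroup E] [Module ℂ E] [Module ℝ E]
    [IsScalarTower ℝ ℂ E] (c : ℂ) (u v : E) :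
    c • u + conj c • v = c.re • (u + v) + c.im • (Complex.I • u - Complex.I • v) := by
  rw [← algebraMap_smul ℂ c.re, ← algebraMap_smul ℂ c.im, Complex.coe_algebraMap]
  conv_lhs => rw [← Complex.re_add_im c, map_add, map_mul, Complex.conj_ofReal,
    Complex.conj_ofReal, Complex.conj_I]
  module

theorem Seminorm.smul_add_conj_smul_le {E : Type*} [AddCommGroup E] [Module ℂ E] [Module ℝ E]
    [IsScalarTower ℝ ℂ E] (N : Seminorm ℝ E) (c : ℂ) (u v : E) :
    N (c • u + conj c • v) ≤
      |c.re| * N (u + v) + |c.im| * N (Complex.I • u - Complex.I • v) := by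
  rw [smul_add_conj_smul_eq, ← Real.norm_eq_abs, ← Real.norm_eq_abs, ← map_smul_eq_mul,
    ← map_smul_eq_mul]
  exact map_add_le_add N _ _

theorem Seminorm.mul_conj_smul {E : Type*} [AddCommGroup E] [Module ℂ E] [Module ℝ E]
    [IsScalarTower ℝ ℂ E] (N : Seminorm ℝ E) (z : ℂ) (u : E) :
    N ((z * conj z) • u) = ‖z‖ ^ 2 * N u := by
  rw [Complex.mul_conj', ← Complex.ofReal_pow, ← Complex.coe_algebraMap, algebraMap_smul,
    map_smul_eq_mul, norm_pow, norm_norm]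

theorem Seminorm.map_sum_le {𝕜 E ι : Type*} [SeminormedRing 𝕜] [AddCommGroup E] [SMul 𝕜 E]
    (p : Seminorm 𝕜 E) (s : Finset ι) (f : ι → E) : p (∑ i ∈ s, f i) ≤ ∑ i ∈ s, p (f i) :=
  le_sum_of_subadditive p (map_zero p).le (map_add_le_add p) s f

theorem stmt4_general (n : ℕ)
    (N : Seminorm ℝ (Matrix (Fin n) (Fin n) ℂ))
    (d : ℕ) (ψ : Fin d → (Fin n → ℂ)) (α : Fin d → ℂ)
    (x : Fin n → ℂ) (hx : x = ∑ a, α a • ψ a) :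
    N (outerProd x x) ≤
      (∑ a, ‖α a‖ ^ 2 * N (outerProd (ψ a) (ψ a))) +
      ∑ a, ∑ b ∈ Finset.Ioi a,
        (|(α a * (starRingEnd ℂ) (α b)).re| *
            N (outerProd (ψ a) (ψ b) + outerProd (ψ b) (ψ a)) +
         |(α a * (starRingEnd ℂ) (α b)).im| *
            N (Complex.I • outerProd (ψ a) (ψ b)
               - Complex.I • outerProd (ψ b) (ψ a))) := by
  rw [hx, outerProd_sum_smul_sum, sum_sum_eq_sum_add_sum_sum_Ioi]
  refine (map_add_le_add N _ _).trans (add_le_add ?_ ?_)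
  · exact (N.map_sum_le _ _).trans_eq (sum_congr rfl fun a _ => N.mul_conj_smul (α a) _)
  · refine (N.map_sum_le _ _).trans <| sum_le_sum fun a _ =>
      (N.map_sum_le _ _).trans <| sum_le_sum fun b _ => ?_
    have hswap : α b * conj (α a) = conj (α a * conj (α b)) := by
      rw [map_mul, Complex.conj_conj, mul_comm]
    rw [hswap]
    exact N.smul_add_conj_smul_le _ _ _

/-- 'If' direction of Lemma 2: a seminorm bound on the projector onto a
superposition `x = ∑ a, α a • ψ a` in terms of the seminorms of the Hermitian
matrix units built from the basis vectors. -/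
theorem stmt4 (n : ℕ) (hn : 1 ≤ n)
    (N : Seminorm ℝ (Matrix (Fin n) (Fin n) ℂ))
    (d : ℕ) (hd : 1 ≤ d) (ψ : Fin d → (Fin n → ℂ)) (α : Fin d → ℂ)
    (x : Fin n → ℂ) (hx : x = ∑ a, α a • ψ a) :
    N (outerProd x x) ≤
      (∑ a, ‖α a‖ ^ 2 * N (outerProd (ψ a) (ψ a))) +
      ∑ a, ∑ b ∈ Finset.Ioi a,
        (|(α a * (starRingEnd ℂ) (α b)).re| *
            N (outerProd (ψ a) (ψ b) + outerProd (ψ b) (ψ a)) +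
         |(α a * (starRingEnd ℂ) (α b)).im| *
            N (Complex.I • outerProd (ψ a) (ψ b)
               - Complex.I • outerProd (ψ b) (ψ a))) :=
  stmt4_general n N d ψ α x hx
end

section
/- Fix m ≥ 1. Let σ = (1/2) • (σ₀ + (1/√3) • (σ₁ + σ₂ + σ₃)) be the single-qubit magic state density matrix, and let Σ_m = σ ⊗ ⋯ ⊗ σ be its m-fold Kronecker product, a matrix indexed by (Fin m → Fin 2). Then Σ_{s : Fin m → Fin 4} |trace(P(s) * Σ_m)| = (1 + √3)^m. Consequently, for the traceless part Õ = Σ_m − 2^{−m} • 1, we have 2^{1−m} · Σ_{s : Fin m → Fin 4} |trace(P(s) * Õ)| = 2^{1−m} · ((1 + √3)^m − 1). -/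
/-! Pauli strings and the product state `σ^{⊗m}` are both Kronecker products, so each overlap
`tr(P(s) σ^{⊗m})` factors as `∏ i, tr(σ_{s i} σ)`, and the sum over strings is
`(∑_k |tr(σ_k σ)|)^m = (1 + 3/√3)^m` by the orthogonality `tr(σ_j σ_k) = 2 δ_{jk}`.
Subtracting `2^{-m} • 1` changes only the overlap with the identity string, from `1` to `0`,
because every other Pauli string is traceless. -/

open Finset

/-- The single-qubit Pauli matrices `σ₀ = I, σ₁ = X, σ₂ = Y, σ₃ = Z`. -/
noncomputable def pauli : Fin 4 → Matrix (Fin 2) (Fin 2) ℂ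
  | 0 => 1
  | 1 => !![0, 1; 1, 0]
  | 2 => !![0, -Complex.I; Complex.I, 0]
  | 3 => !![1, 0; 0, -1]

/-- The `m`-fold Kronecker product `σ_{s 0} ⊗ ⋯ ⊗ σ_{s (m-1)}` of Pauli
matrices, as a matrix indexed by `Fin m → Fin 2`. -/
noncomputable def pauliString {m : ℕ} (s : Fin m → Fin 4) :
    Matrix (Fin m → Fin 2) (Fin m → Fin 2) ℂ :=
  fun x y => ∏ i, pauli (s i) (x i) (y i)

/-- The single-qubit magic state density matrix
`σ = (I + (X + Y + Z)/√3) / 2`. -/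
noncomputable def magicState : Matrix (Fin 2) (Fin 2) ℂ :=
  ((1 : ℂ) / 2) • (pauli 0 +
    (((Real.sqrt 3)⁻¹ : ℝ) : ℂ) • (pauli 1 + pauli 2 + pauli 3))

/-- The `m`-fold Kronecker product of the magic state with itself, as a
matrix indexed by `Fin m → Fin 2`. -/
noncomputable def magicStateM (m : ℕ) :
    Matrix (Fin m → Fin 2) (Fin m → Fin 2) ℂ :=
  fun x y => ∏ i, magicState (x i) (y i)

namespace Matrix

variable {ι n R : Type*} [Fintype ι] [CommSemiring R]

def kronPi (A : ι → Matrix n n R) : Matrix (ι → n) (ι → n) R :=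
  of fun x y => ∏ i, A i (x i) (y i)

theorem kronPi_one [DecidableEq n] : kronPi (fun _ : ι => (1 : Matrix n n R)) = 1 := by
  ext x y
  simp only [kronPi, of_apply, one_apply, Finset.prod_boole, Finset.mem_univ, true_implies,
    funext_iff]

variable [Fintype n] [DecidableEq ι]

theorem trace_kronPi (A : ι → Matrix n n R) : (kronPi A).trace = ∏ i, (A i).trace := by
  simp only [trace, diag, kronPi, of_apply, Fintype.prod_sum]

theorem kronPi_mul_kronPi (A B : ι → Matrix n n R) :
    kronPi A * kronPi B = kronPi fun i => A i * B i := by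
  ext x y
  simp only [kronPi, mul_apply, of_apply, Fintype.prod_sum, Finset.prod_mul_distrib]

end Matrix

open Matrix

theorem pauliString_eq_kronPi {m : ℕ} (s : Fin m → Fin 4) :
    pauliString s = kronPi fun i => pauli (s i) := rfl

theorem magicStateM_eq_kronPi (m : ℕ) : magicStateM m = kronPi fun _ => magicState := rfl

theorem trace_pauli_mul_pauli (j k : Fin 4) :
    (pauli j * pauli k).trace = if j = k then 2 else 0 := by
  fin_cases j <;> fin_cases k <;> simp [pauli, trace_fin_two, one_fin_two] <;> norm_num

theorem trace_pauli_of_ne_zero {k : Fin 4} (hk : k ≠ 0) : (pauli k).trace = 0 := by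
  simpa [pauli, hk.symm] using trace_pauli_mul_pauli 0 k

theorem pauliString_zero (m : ℕ) : pauliString (0 : Fin m → Fin 4) = 1 :=
  kronPi_one

theorem trace_pauliString_of_ne_zero {m : ℕ} {s : Fin m → Fin 4} (hs : s ≠ 0) :
    (pauliString s).trace = 0 := by
  obtain ⟨i, hi⟩ := Function.ne_iff.mp hs
  rw [pauliString_eq_kronPi, trace_kronPi]
  exact Finset.prod_eq_zero (Finset.mem_univ i) (trace_pauli_of_ne_zero hi)

theorem sum_norm_trace_pauliString_mul_kronPi (m : ℕ) (ρ : Matrix (Fin 2) (Fin 2) ℂ) :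
    ∑ s : Fin m → Fin 4, ‖(pauliString s * kronPi fun _ => ρ).trace‖ =
      (∑ k, ‖(pauli k * ρ).trace‖) ^ m := by
  simp only [Fintype.sum_pow, pauliString_eq_kronPi, kronPi_mul_kronPi, trace_kronPi, norm_prod]

theorem sum_norm_trace_pauliString_mul_sub {m : ℕ}
    {ρ : Matrix (Fin m → Fin 2) (Fin m → Fin 2) ℂ} (hρ : ρ.trace = 1) :
    ∑ s : Fin m → Fin 4, ‖(pauliString s * (ρ - ((2 : ℂ) ^ m)⁻¹ • 1)).trace‖ =
      ∑ s : Fin m → Fin 4, ‖(pauliString s * ρ).trace‖ - 1 := by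
  have hzero : (pauliString 0 * (ρ - ((2 : ℂ) ^ m)⁻¹ • 1)).trace = 0 := by
    simp [pauliString_zero, trace_sub, hρ]
  have hne : ∀ s ∈ Finset.univ.erase (0 : Fin m → Fin 4),
      ‖(pauliString s * (ρ - ((2 : ℂ) ^ m)⁻¹ • 1)).trace‖ = ‖(pauliString s * ρ).trace‖ := by
    intro s hs
    rw [Matrix.mul_sub, Matrix.mul_smul, Matrix.mul_one, trace_sub, trace_smul,
      trace_pauliString_of_ne_zero (Finset.ne_of_mem_erase hs), smul_zero, sub_zero]
  rw [← Finset.add_sum_erase _ _ (Finset.mem_univ 0),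
    ← Finset.add_sum_erase _ _ (Finset.mem_univ 0), Finset.sum_congr rfl hne, hzero,
    pauliString_zero, Matrix.one_mul, hρ]
  simp

theorem trace_pauli_mul_magicState (k : Fin 4) :
    (pauli k * magicState).trace = if k = 0 then 1 else (((Real.sqrt 3)⁻¹ : ℝ) : ℂ) := by
  simp only [magicState, Matrix.mul_smul, Matrix.mul_add, trace_smul, trace_add,
    trace_pauli_mul_pauli, smul_eq_mul]
  fin_cases k <;> simp [Fin.ext_iff] <;> ring

theorem trace_magicState : magicState.trace = 1 := by
  simpa [pauli] using trace_pauli_mul_magicState 0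

theorem sum_norm_trace_pauli_mul_magicState :
    ∑ k, ‖(pauli k * magicState).trace‖ = 1 + Real.sqrt 3 := by
  have h3 : 3 * (Real.sqrt 3)⁻¹ = Real.sqrt 3 := by
    rw [← div_eq_mul_inv, div_eq_iff (by positivity), Real.mul_self_sqrt (by norm_num)]
  simp [Fin.sum_univ_four, trace_pauli_mul_magicState, abs_of_nonneg (Real.sqrt_nonneg 3)]
  linarith

theorem stmt8_general (m : ℕ) :
    (∑ s : Fin m → Fin 4, ‖(pauliString s * magicStateM m).trace‖)
        = (1 + Real.sqrt 3) ^ m ∧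
    (2 : ℝ) ^ ((1 : ℤ) - m) *
      (∑ s : Fin m → Fin 4, ‖
        ((pauliString s *
            (magicStateM m - (((2 : ℂ) ^ m)⁻¹) •
              (1 : Matrix (Fin m → Fin 2) (Fin m → Fin 2) ℂ))).trace)‖)
      = (2 : ℝ) ^ ((1 : ℤ) - m) * ((1 + Real.sqrt 3) ^ m - 1) := by
  have hsum : ∑ s : Fin m → Fin 4, ‖(pauliString s * magicStateM m).trace‖ =
      (1 + Real.sqrt 3) ^ m := by
    rw [magicStateM_eq_kronPi, sum_norm_trace_pauliString_mul_kronPi,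
      sum_norm_trace_pauli_mul_magicState]
  have htrace : (magicStateM m).trace = 1 := by
    simp [magicStateM_eq_kronPi, trace_kronPi, trace_magicState]
  exact ⟨hsum, by rw [sum_norm_trace_pauliString_mul_sub htrace, hsum]⟩

/-- The Pauli DFE cost of the `m`-fold tensor product of magic states:
`∑_P |tr(P Σ_m)| = (1 + √3)^m`, hence the cost of the traceless part is
`2^{1-m}((1 + √3)^m − 1)`, exponentially large in `m`. -/
theorem stmt8 (m : ℕ) (hm : 1 ≤ m) :
    (∑ s : Fin m → Fin 4, ‖(pauliString s * magicStateM m).trace‖)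
        = (1 + Real.sqrt 3) ^ m ∧
    (2 : ℝ) ^ ((1 : ℤ) - m) *
      (∑ s : Fin m → Fin 4, ‖
        ((pauliString s *
            (magicStateM m - (((2 : ℂ) ^ m)⁻¹) •
              (1 : Matrix (Fin m → Fin 2) (Fin m → Fin 2) ℂ))).trace)‖)
      = (2 : ℝ) ^ ((1 : ℤ) - m) * ((1 + Real.sqrt 3) ^ m - 1) :=
  stmt8_general m
end

section
/- Let H be a real inner product space and let a, b ∈ H with ⟪a, b⟫ ≤ 0. Set t = ‖b‖² / (‖a‖² + ‖b‖²) (assuming ‖a‖² + ‖b‖² > 0) and c = t • a + (1 − t) • b. Then ‖c‖² ≤ ‖a‖² · ‖b‖² / (‖a‖² + ‖b‖²); in particular, if a ≠ 0, b ≠ 0, and c ≠ 0, then 1/‖c‖² ≥ 1/‖a‖² + 1/‖b‖². -/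
/-!
Since `⟪a, b⟫ ≤ 0`, the cross term in `‖t • a + (1 - t) • b‖²` can be dropped, and the weight
`t = ‖b‖² / (‖a‖² + ‖b‖²)` minimises what remains, `t² ‖a‖² + (1 - t)² ‖b‖²`, with minimum
`‖a‖² ‖b‖² / (‖a‖² + ‖b‖²)`, the reciprocal of `1 / ‖a‖² + 1 / ‖b‖²`.
-/

open scoped RealInnerProductSpace

theorem norm_smul_add_smul_sq_le_of_inner_nonpos {H : Type*} [NormedAddCommGroup H]
    [InnerProductSpace ℝ H] {a b : H} (hab : ⟪a, b⟫ ≤ 0) {s u : ℝ} (hsu : 0 ≤ s * u) :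
    ‖s • a + u • b‖ ^ 2 ≤ s ^ 2 * ‖a‖ ^ 2 + u ^ 2 * ‖b‖ ^ 2 := by
  have hcross : 2 * (s * u) * ⟪a, b⟫ ≤ 0 := by nlinarith
  calc ‖s • a + u • b‖ ^ 2
      = s ^ 2 * ‖a‖ ^ 2 + 2 * (s * u) * ⟪a, b⟫ + u ^ 2 * ‖b‖ ^ 2 := by
        rw [norm_add_sq_real, norm_smul, norm_smul, real_inner_smul_left,
          real_inner_smul_right, mul_pow, mul_pow, Real.norm_eq_abs, Real.norm_eq_abs,
          sq_abs, sq_abs]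
        ring
    _ ≤ s ^ 2 * ‖a‖ ^ 2 + u ^ 2 * ‖b‖ ^ 2 := by linarith

theorem div_add_sq_mul_add_one_sub_div_add_sq_mul {A B : ℝ} (hAB : A + B ≠ 0) :
    (B / (A + B)) ^ 2 * A + (1 - B / (A + B)) ^ 2 * B = A * B / (A + B) := by
  field_simp
  ring

theorem one_div_add_one_div_le_one_div_of_le_mul_div_add {A B x : ℝ} (hA : 0 < A) (hB : 0 < B)
    (hx : 0 < x) (hxAB : x ≤ A * B / (A + B)) : 1 / A + 1 / B ≤ 1 / x := by
  have hharm : 1 / A + 1 / B = 1 / (A * B / (A + B)) := by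
    field_simp
    ring
  rw [hharm]
  exact one_div_le_one_div_of_le hx hxAB

/-- One-step estimate in the iterative construction of Theorem 2: if
`⟪a, b⟫ ≤ 0`, the convex combination `c = t • a + (1 − t) • b` with
`t = ‖b‖² / (‖a‖² + ‖b‖²)` satisfies `‖c‖² ≤ ‖a‖²‖b‖²/(‖a‖² + ‖b‖²)`, so
`1/‖c‖² ≥ 1/‖a‖² + 1/‖b‖²`. -/
theorem stmt10 {H : Type*} [NormedAddCommGroup H] [InnerProductSpace ℝ H]
    (a b : H) (hab : ⟪a, b⟫ ≤ 0)
    (hpos : 0 < ‖a‖ ^ 2 + ‖b‖ ^ 2)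
    (t : ℝ) (ht : t = ‖b‖ ^ 2 / (‖a‖ ^ 2 + ‖b‖ ^ 2))
    (c : H) (hc : c = t • a + (1 - t) • b) :
    ‖c‖ ^ 2 ≤ ‖a‖ ^ 2 * ‖b‖ ^ 2 / (‖a‖ ^ 2 + ‖b‖ ^ 2) ∧
    (a ≠ 0 → b ≠ 0 → c ≠ 0 →
      1 / ‖a‖ ^ 2 + 1 / ‖b‖ ^ 2 ≤ 1 / ‖c‖ ^ 2) := by
  have ht0 : 0 ≤ t := by rw [ht]; positivity
  have ht1 : t ≤ 1 := by rw [ht, div_le_one hpos]; linarith [sq_nonneg ‖a‖]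
  have hbound : ‖c‖ ^ 2 ≤ ‖a‖ ^ 2 * ‖b‖ ^ 2 / (‖a‖ ^ 2 + ‖b‖ ^ 2) := by
    rw [← div_add_sq_mul_add_one_sub_div_add_sq_mul hpos.ne', ← ht, hc]
    exact norm_smul_add_smul_sq_le_of_inner_nonpos hab (mul_nonneg ht0 (sub_nonneg.2 ht1))
  refine ⟨hbound, fun ha hb hc0 => ?_⟩
  exact one_div_add_one_div_le_one_div_of_le_mul_div_add (by positivity) (by positivity)
    (by positivity) hbound
end

section
/- Let H be a real inner product space, B > 0, and Δ : ℕ → H a sequence with 0 < ‖Δ n‖ ≤ B for all n ≥ 1. Define ς : ℕ → H by ς 1 = Δ 1 and ς (n+1) = t_n • Δ (n+1) + (1 − t_n) • ς n, where t_n = ‖ς n‖² / (‖Δ (n+1)‖² + ‖ς n‖²). If ⟪ς n, Δ (n+1)⟫ ≤ 0 for all n ≥ 1, then ‖ς n‖² ≤ B² / n for every n ≥ 1. -/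
open scoped RealInnerProductSpace

/-!
Write `a = ‖Δ (n+1)‖²` and `s = ‖ς n‖²`. Because `⟪ς n, Δ (n+1)⟫ ≤ 0`, the cross term of
`‖t • Δ (n+1) + (1 - t) • ς n‖²` is nonpositive, and the weight `t = s / (a + s)` minimises
`t² a + (1 - t)² s`, with minimum `a s / (a + s) = (a⁻¹ + s⁻¹)⁻¹`. So `‖ς‖⁻²` grows by at least
`a⁻¹ ≥ B⁻²` per step, which gives `‖ς n‖² ≤ B² / n`.
-/

section ConvexStep

variable {H : Type*} [NormedAddCommGroup H] [InnerProductSpace ℝ H]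

theorem norm_sq_smul_add_one_sub_smul_le {x y : H} (hxy : ⟪x, y⟫ ≤ 0) {t : ℝ}
    (ht₀ : 0 ≤ t) (ht₁ : t ≤ 1) :
    ‖t • y + (1 - t) • x‖ ^ 2 ≤ t ^ 2 * ‖y‖ ^ 2 + (1 - t) ^ 2 * ‖x‖ ^ 2 := by
  have hcross : t * ((1 - t) * ⟪y, x⟫) ≤ 0 :=
    mul_nonpos_of_nonneg_of_nonpos ht₀
      (mul_nonpos_of_nonneg_of_nonpos (sub_nonneg.2 ht₁) (real_inner_comm x y ▸ hxy))
  rw [norm_add_sq_real, real_inner_smul_left, real_inner_smul_right, norm_smul, norm_smul,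
    mul_pow, mul_pow, Real.norm_eq_abs, Real.norm_eq_abs, sq_abs, sq_abs]
  linarith

theorem sq_div_mul_add_sq_one_sub_div_mul {a s : ℝ} (h : a + s ≠ 0) :
    (s / (a + s)) ^ 2 * a + (1 - s / (a + s)) ^ 2 * s = a * s / (a + s) := by
  field_simp
  ring

theorem norm_sq_optimal_step_le {x y : H} (hxy : ⟪x, y⟫ ≤ 0) :
    ‖(‖x‖ ^ 2 / (‖y‖ ^ 2 + ‖x‖ ^ 2)) • y + (1 - ‖x‖ ^ 2 / (‖y‖ ^ 2 + ‖x‖ ^ 2)) • x‖ ^ 2 ≤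
      ‖y‖ ^ 2 * ‖x‖ ^ 2 / (‖y‖ ^ 2 + ‖x‖ ^ 2) := by
  rcases (add_nonneg (sq_nonneg ‖y‖) (sq_nonneg ‖x‖)).eq_or_lt with hsum | hsum
  · have hx : x = 0 := by
      rw [← norm_eq_zero, ← sq_eq_zero_iff]
      linarith [sq_nonneg ‖y‖, sq_nonneg ‖x‖]
    simp [hx]
  · have ht₁ : ‖x‖ ^ 2 / (‖y‖ ^ 2 + ‖x‖ ^ 2) ≤ 1 :=
      (div_le_one hsum).2 (le_add_of_nonneg_left (sq_nonneg _))
    refine (norm_sq_smul_add_one_sub_smul_le hxy (by positivity) ht₁).trans_eq ?_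
    exact sq_div_mul_add_sq_one_sub_div_mul hsum.ne'

end ConvexStep

theorem mul_div_add_le_div_add_one {a s C n : ℝ} (ha : 0 ≤ a) (hs : 0 ≤ s) (hn : 0 ≤ n)
    (haC : a ≤ C) (hsC : s * n ≤ C) : a * s / (a + s) ≤ C / (n + 1) := by
  rcases (add_nonneg ha hs).eq_or_lt with hsum | hsum
  · rw [← hsum, div_zero]
    exact div_nonneg (ha.trans haC) (by linarith)
  · rw [div_le_div_iff₀ hsum (by linarith)]
    nlinarith [mul_le_mul_of_nonneg_left hsC ha, mul_le_mul_of_nonneg_right haC hs]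

theorem stmt11_general {H : Type*} [NormedAddCommGroup H] [InnerProductSpace ℝ H]
    (B : ℝ) (Δ : ℕ → H)
    (hΔ : ∀ n : ℕ, 1 ≤ n → 0 < ‖Δ n‖ ∧ ‖Δ n‖ ≤ B)
    (ς : ℕ → H) (h1 : ς 1 = Δ 1)
    (hrec : ∀ n : ℕ, 1 ≤ n →
      ς (n + 1) = (‖ς n‖ ^ 2 / (‖Δ (n + 1)‖ ^ 2 + ‖ς n‖ ^ 2)) • Δ (n + 1) +
        (1 - ‖ς n‖ ^ 2 / (‖Δ (n + 1)‖ ^ 2 + ‖ς n‖ ^ 2)) • ς n)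
    (hip : ∀ n : ℕ, 1 ≤ n → ⟪ς n, Δ (n + 1)⟫ ≤ 0) :
    ∀ n : ℕ, 1 ≤ n → ‖ς n‖ ^ 2 ≤ B ^ 2 / n := by
  have hΔsq (n : ℕ) (hn : 1 ≤ n) : ‖Δ n‖ ^ 2 ≤ B ^ 2 :=
    pow_le_pow_left₀ (norm_nonneg _) (hΔ n hn).2 2
  intro n hn
  induction n, hn using Nat.le_induction with
  | base => simpa [h1] using hΔsq 1 le_rfl
  | succ n hn ih =>
    have hn₀ : (0 : ℝ) < n := by exact_mod_cast hn
    rw [hrec n hn, Nat.cast_succ]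
    exact (norm_sq_optimal_step_le (hip n hn)).trans <|
      mul_div_add_le_div_add_one (sq_nonneg _) (sq_nonneg _) hn₀.le (hΔsq (n + 1) (by omega))
        ((le_div_iff₀ hn₀).1 ih)

/-- Inductive decay bound in the proof of Theorem 2: the deviations `ς n` of
the iteratively constructed measurement ensemble satisfy `‖ς n‖² ≤ B²/n`. -/
theorem stmt11 {H : Type*} [NormedAddCommGroup H] [InnerProductSpace ℝ H]
    (B : ℝ) (hB : 0 < B) (Δ : ℕ → H)
    (hΔ : ∀ n : ℕ, 1 ≤ n → 0 < ‖Δ n‖ ∧ ‖Δ n‖ ≤ B)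
    (ς : ℕ → H) (h1 : ς 1 = Δ 1)
    (hrec : ∀ n : ℕ, 1 ≤ n →
      ς (n + 1) = (‖ς n‖ ^ 2 / (‖Δ (n + 1)‖ ^ 2 + ‖ς n‖ ^ 2)) • Δ (n + 1) +
        (1 - ‖ς n‖ ^ 2 / (‖Δ (n + 1)‖ ^ 2 + ‖ς n‖ ^ 2)) • ς n)
    (hip : ∀ n : ℕ, 1 ≤ n → ⟪ς n, Δ (n + 1)⟫ ≤ 0) :
    ∀ n : ℕ, 1 ≤ n → ‖ς n‖ ^ 2 ≤ B ^ 2 / n :=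
  stmt11_general B Δ hΔ ς h1 hrec hip
end

section
/- Let H be a finite-dimensional real inner product space, let x ∈ H with x ≠ 0, let S ⊆ H be a nonempty bounded set, and let y > 0. Assume that for every w ∈ H with ⟪w, x⟫ = 0 there exists u ∈ S with ⟪u, w⟫ ≤ 0 and ⟪u, x⟫ ≥ y. Then there exist a real number t with t ≥ y / ‖x‖² and a point z in the closure of the convex hull of S such that z = t • x. -/
open scoped RealInnerProductSpace

/-!
Put `K = closure (convexHull ℝ S)`, which is convex and compact. If `K` missed the ray
`{t • x | t ≥ y / ‖x‖²}`, a separating hyperplane `⟪w, ·⟫` would give `⟪w, k⟫ < t₀ ⟪w, x⟫` on `K`,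
with `t₀ = y / ‖x‖²` and `⟪w, x⟫ ≥ 0` since `⟪w, ·⟫` stays bounded below along the ray.
Applying the hypothesis to the component of `-w` orthogonal to `x` yields `u ∈ S` with
`⟪u, w⟫ ≥ ⟪w, x⟫ ⟪u, x⟫ / ‖x‖² ≥ t₀ ⟪w, x⟫`, a contradiction.
-/

lemma nonneg_of_forall_le_imp_lt_mul {t₀ b s : ℝ} (h : ∀ t, t₀ ≤ t → b < t * s) : 0 ≤ s := by
  by_contra! hs
  have hb := h (max t₀ (b / s)) (le_max_left _ _)
  have : max t₀ (b / s) * s ≤ b / s * s :=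
    mul_le_mul_of_nonpos_right (le_max_right _ _) hs.le
  rw [div_mul_cancel₀ b hs.ne] at this
  linarith

section InnerProductSpace

variable {H : Type*} [NormedAddCommGroup H] [InnerProductSpace ℝ H]

lemma inner_div_norm_sq_smul_sub_self (w x : H) :
    ⟪(⟪w, x⟫ / ‖x‖ ^ 2) • x - w, x⟫ = 0 := by
  rw [inner_sub_left, real_inner_smul_left, real_inner_self_eq_norm_sq, sub_eq_zero]
  refine div_mul_cancel_of_imp fun hx ↦ ?_
  simp [norm_eq_zero.mp (pow_eq_zero_iff two_ne_zero |>.mp hx)]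

lemma exists_inner_lt_of_forall_smul_notMem [FiniteDimensional ℝ H] {K : Set H}
    (hKconv : Convex ℝ K) (hKcomp : IsCompact K) (x : H) (t₀ : ℝ)
    (hK : ∀ t, t₀ ≤ t → t • x ∉ K) :
    ∃ w : H, 0 ≤ ⟪w, x⟫ ∧ ∀ k ∈ K, ⟪w, k⟫ < t₀ * ⟪w, x⟫ := by
  have hray_conv : Convex ℝ ((· • x) '' Set.Ici t₀) :=
    (convex_Ici t₀).linear_image (LinearMap.toSpanSingleton ℝ H x)
  have hray_closed : IsClosed ((· • x) '' Set.Ici t₀) := isClosedMap_smul_left x _ isClosed_Ici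
  have hdisj : Disjoint K ((· • x) '' Set.Ici t₀) := by
    rw [Set.disjoint_right]
    rintro _ ⟨t, ht, rfl⟩
    exact hK t ht
  obtain ⟨f, a, b, hfK, hab, hfray⟩ :=
    geometric_hahn_banach_compact_closed hKconv hKcomp hray_conv hray_closed hdisj
  set w := (InnerProductSpace.toDual ℝ H).symm f
  have hf : ∀ v, f v = ⟪w, v⟫ := fun v ↦ (InnerProductSpace.toDual_symm_apply).symm
  have hray : ∀ t, t₀ ≤ t → b < t * ⟪w, x⟫ := fun t ht ↦ by
    simpa [hf, real_inner_smul_right] using hfray (t • x) ⟨t, ht, rfl⟩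
  refine ⟨w, nonneg_of_forall_le_imp_lt_mul hray, fun k hk ↦ ?_⟩
  linarith [hray t₀ le_rfl, hf k ▸ hfK k hk]

end InnerProductSpace

theorem stmt12_general {H : Type*} [NormedAddCommGroup H] [InnerProductSpace ℝ H]
    [FiniteDimensional ℝ H]
    (x : H) (S : Set H)
    (hSb : Bornology.IsBounded S) (y : ℝ)
    (h : ∀ w : H, ⟪w, x⟫ = 0 → ∃ u ∈ S, ⟪u, w⟫ ≤ 0 ∧ y ≤ ⟪u, x⟫) :
    ∃ t : ℝ, y / ‖x‖ ^ 2 ≤ t ∧ t • x ∈ closure (convexHull ℝ S) := by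
  by_contra! hray
  obtain ⟨w, hwx, hwK⟩ := exists_inner_lt_of_forall_smul_notMem
    (convex_convexHull ℝ S).closure
    (isBounded_convexHull.mpr hSb).isCompact_closure
    x (y / ‖x‖ ^ 2) hray
  obtain ⟨u, huS, huw, hux⟩ := h _ (inner_div_norm_sq_smul_sub_self w x)
  have hc : 0 ≤ ⟪w, x⟫ / ‖x‖ ^ 2 := by positivity
  have hlower : y / ‖x‖ ^ 2 * ⟪w, x⟫ ≤ ⟪u, w⟫ :=
    calc y / ‖x‖ ^ 2 * ⟪w, x⟫ = ⟪w, x⟫ / ‖x‖ ^ 2 * y := by ring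
      _ ≤ ⟪w, x⟫ / ‖x‖ ^ 2 * ⟪u, x⟫ := mul_le_mul_of_nonneg_left hux hc
      _ ≤ ⟪u, w⟫ := by
        rw [inner_sub_right, real_inner_smul_right] at huw
        linarith
  have hupper := hwK u (subset_closure (subset_convexHull ℝ S huS))
  rw [real_inner_comm] at hupper
  linarith

/-- Abstract form of Theorem 2 on the measurement contrast: if every direction
`w` orthogonal to the target `x` admits an available measurement `u ∈ S` with
`⟪u, w⟫ ≤ 0` and `⟪u, x⟫ ≥ y`, then some multiple `t • x` with `t ≥ y/‖x‖²`
lies in the closed convex hull of `S`. -/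
theorem stmt12 {H : Type*} [NormedAddCommGroup H] [InnerProductSpace ℝ H]
    [FiniteDimensional ℝ H]
    (x : H) (hx : x ≠ 0) (S : Set H) (hS : S.Nonempty)
    (hSb : Bornology.IsBounded S) (y : ℝ) (hy : 0 < y)
    (h : ∀ w : H, ⟪w, x⟫ = 0 → ∃ u ∈ S, ⟪u, w⟫ ≤ 0 ∧ y ≤ ⟪u, x⟫) :
    ∃ t : ℝ, y / ‖x‖ ^ 2 ≤ t ∧ t • x ∈ closure (convexHull ℝ S) :=
  stmt12_general x S hSb y h
end

section
/- Let n ≥ 1 and let G be a finite subgroup of the group of n × n complex unitary matrices such that |G| = n, every element of G is Hermitian, and every element of G other than the identity has trace 0. Then σ := (1/n) • Σ_{g ∈ G} g satisfies: σ is Hermitian, σ * σ = σ, trace(σ) = 1, and there exists a unit vector u ∈ ℂⁿ with σ = u u*; moreover trace(g * σ) = 1 for every g ∈ G. -/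
open Matrix Finset

/-!
Each `g ∈ G` is left-cancellable and `G` is closed under multiplication, so left multiplication
by `g` permutes the finite set `G`; hence `g σ = σ`, and averaging over `g` gives `σ² = σ`.
Only the identity contributes to the trace, so `tr σ = 1`. A Hermitian projector `P` of trace 1
has rank one: for a unit vector `u` with `P u = u`, `P - u u*` is again a Hermitian projector,
now of trace 0, and such a projector `Q` vanishes since `tr (Qᴴ Q) = tr Q = 0`.
-/

theorem mul_sum_eq_sum_of_isLeftRegular {R : Type*} [NonUnitalNonAssocSemiring R]
    {G : Finset R} {g : R} (hg : IsLeftRegular g) (hmul : ∀ h ∈ G, g * h ∈ G) :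
    g * ∑ h ∈ G, h = ∑ h ∈ G, h := by
  have hinj : Set.InjOn (g * ·) G := fun _ _ _ _ hab => hg hab
  rw [Finset.mul_sum]
  exact Finset.sum_nbij (g * ·) hmul hinj (surjOn_of_injOn_of_card_le _ hmul hinj le_rfl)
    fun _ _ => rfl

theorem isIdempotentElem_inv_card_smul_sum {K A : Type*} [Field K] [CharZero K] [Ring A]
    [Algebra K A] {G : Finset A} (hG : G.Nonempty)
    (habs : ∀ g ∈ G, g * ∑ h ∈ G, h = ∑ h ∈ G, h) :
    IsIdempotentElem ((#G : K)⁻¹ • ∑ h ∈ G, h) := by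
  have hcard : (#G : K) ≠ 0 := by exact_mod_cast hG.card_ne_zero
  have hsq : (∑ h ∈ G, h) * ∑ h ∈ G, h = (#G : K) • ∑ h ∈ G, h := by
    rw [Finset.sum_mul, Finset.sum_congr rfl habs, Finset.sum_const, Nat.cast_smul_eq_nsmul]
  rw [IsIdempotentElem, smul_mul_smul_comm, hsq, smul_smul, mul_assoc, inv_mul_cancel₀ hcard,
    mul_one]

namespace Matrix

variable {m : Type*}

section CommRing

variable {α : Type*} [CommRing α] [StarRing α] {P : Matrix m m α} {u : m → α}

theorem IsHermitian.sub_vecMulVec_star (hP : P.IsHermitian) :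
    (P - vecMulVec u (star u)).IsHermitian := by
  rw [IsHermitian, conjTranspose_sub, conjTranspose_vecMulVec, star_star, hP.eq]

theorem IsHermitian.isIdempotentElem_sub_vecMulVec_star [Fintype m] (hP : P.IsHermitian)
    (hidem : IsIdempotentElem P) (hu : star u ⬝ᵥ u = 1) (hPu : P *ᵥ u = u) :
    IsIdempotentElem (P - vecMulVec u (star u)) := by
  have huP : star u ᵥ* P = star u := by
    rw [← hP.eq, ← star_mulVec, hPu]
  rw [IsIdempotentElem, sub_mul, mul_sub, mul_sub, hidem.eq, mul_vecMulVec, vecMulVec_mul,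
    vecMulVec_mul_vecMulVec, hPu, huP, hu, one_smul]
  abel

end CommRing

variable [Fintype m] {𝕜 : Type*} [RCLike 𝕜]

open scoped ComplexOrder

theorem IsHermitian.eq_zero_of_isIdempotentElem_of_trace_eq_zero {Q : Matrix m m 𝕜}
    (hQ : Q.IsHermitian) (hidem : IsIdempotentElem Q) (htr : Q.trace = 0) : Q = 0 := by
  rwa [← trace_conjTranspose_mul_self_eq_zero_iff, hQ.eq, hidem.eq]

theorem exists_star_dotProduct_self_eq_one_smul {v : m → 𝕜} (hv : v ≠ 0) :
    ∃ r : ℝ, star (r • v) ⬝ᵥ (r • v) = 1 := by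
  obtain ⟨x, hx, hxv⟩ := RCLike.pos_iff_exists_ofReal.mp (dotProduct_star_self_pos_iff.mpr hv)
  refine ⟨(√x)⁻¹, ?_⟩
  rw [star_smul, star_trivial, smul_dotProduct, dotProduct_smul, ← hxv, smul_smul,
    RCLike.real_smul_eq_coe_mul, ← RCLike.ofReal_mul, ← mul_inv,
    Real.mul_self_sqrt hx.le, inv_mul_cancel₀ hx.ne', RCLike.ofReal_one]

theorem exists_unit_mulVec_eq_self [DecidableEq m] {P : Matrix m m 𝕜}
    (hidem : IsIdempotentElem P) (hP : P ≠ 0) :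
    ∃ u : m → 𝕜, star u ⬝ᵥ u = 1 ∧ P *ᵥ u = u := by
  obtain ⟨j, hj⟩ : ∃ j, P.col j ≠ 0 := by
    by_contra! h
    exact hP (Matrix.ext fun i j => congrFun (h j) i)
  obtain ⟨r, hr⟩ := exists_star_dotProduct_self_eq_one_smul hj
  refine ⟨r • P.col j, hr, ?_⟩
  rw [mulVec_smul, ← mulVec_single_one, mulVec_mulVec, hidem.eq]

theorem IsHermitian.exists_eq_vecMulVec_of_isIdempotentElem_of_trace_eq_one [DecidableEq m]
    {P : Matrix m m 𝕜} (hP : P.IsHermitian) (hidem : IsIdempotentElem P) (htr : P.trace = 1) :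
    ∃ u : m → 𝕜, star u ⬝ᵥ u = 1 ∧ P = vecMulVec u (star u) := by
  have hP0 : P ≠ 0 := by
    rintro rfl
    simp at htr
  obtain ⟨u, hu, hPu⟩ := exists_unit_mulVec_eq_self hidem hP0
  refine ⟨u, hu, sub_eq_zero.mp ?_⟩
  refine hP.sub_vecMulVec_star.eq_zero_of_isIdempotentElem_of_trace_eq_zero
    (hP.isIdempotentElem_sub_vecMulVec_star hidem hu hPu) ?_
  rw [trace_sub, trace_vecMulVec, dotProduct_comm, hu, htr, sub_self]

end Matrix

theorem stmt13_general (n : ℕ)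
    (G : Finset (Matrix (Fin n) (Fin n) ℂ))
    (h_one : (1 : Matrix (Fin n) (Fin n) ℂ) ∈ G)
    (h_mul : ∀ g ∈ G, ∀ h ∈ G, g * h ∈ G)
    (h_unitary : ∀ g ∈ G, gᴴ * g = 1)
    (h_herm : ∀ g ∈ G, g.IsHermitian)
    (h_card : G.card = n)
    (h_tr : ∀ g ∈ G, g ≠ 1 → g.trace = 0) :
    ((n : ℂ)⁻¹ • ∑ g ∈ G, g).IsHermitian ∧
    ((n : ℂ)⁻¹ • ∑ g ∈ G, g) * ((n : ℂ)⁻¹ • ∑ g ∈ G, g)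
      = (n : ℂ)⁻¹ • ∑ g ∈ G, g ∧
    ((n : ℂ)⁻¹ • ∑ g ∈ G, g).trace = 1 ∧
    (∃ u : Fin n → ℂ, star u ⬝ᵥ u = 1 ∧
      (n : ℂ)⁻¹ • ∑ g ∈ G, g = Matrix.vecMulVec u (star u)) ∧
    (∀ g ∈ G, (g * ((n : ℂ)⁻¹ • ∑ g' ∈ G, g')).trace = 1) := by
  have habs : ∀ g ∈ G, g * ∑ h ∈ G, h = ∑ h ∈ G, h := fun g hg =>
    mul_sum_eq_sum_of_isLeftRegular (isLeftRegular_of_mul_eq_one (h_unitary g hg)) (h_mul g hg)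
  have hherm : ((n : ℂ)⁻¹ • ∑ g ∈ G, g).IsHermitian :=
    ((IsSelfAdjoint.natCast n).inv₀.smul
      (isSelfAdjoint_sum G fun g hg => (h_herm g hg).isSelfAdjoint)).isHermitian
  have hidem : IsIdempotentElem ((n : ℂ)⁻¹ • ∑ g ∈ G, g) := by
    have := isIdempotentElem_inv_card_smul_sum (K := ℂ) ⟨1, h_one⟩ habs
    rwa [h_card] at this
  have htr : ((n : ℂ)⁻¹ • ∑ g ∈ G, g).trace = 1 := by
    have hn : (n : ℂ) ≠ 0 := by
      rw [← h_card]
      exact_mod_cast (Finset.card_pos.mpr ⟨1, h_one⟩).ne'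
    rw [trace_smul, trace_sum, Finset.sum_eq_single_of_mem 1 h_one h_tr, trace_one,
      Fintype.card_fin, smul_eq_mul, inv_mul_cancel₀ hn]
  refine ⟨hherm, hidem, htr,
    hherm.exists_eq_vecMulVec_of_isIdempotentElem_of_trace_eq_one hidem htr, fun g hg => ?_⟩
  rw [Matrix.mul_smul, habs g hg, htr]

/-- Stabilizer-state structure (Corollary 2): if `G` is a finite subgroup of
the `n × n` unitary group with `|G| = n`, all elements Hermitian and all
non-identity elements traceless, then `σ = (1/n) ∑_{g ∈ G} g` is a rank-one
Hermitian projector of trace 1, and every `g ∈ G` has expectation 1 in `σ`. -/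
theorem stmt13 (n : ℕ) (hn : 1 ≤ n)
    (G : Finset (Matrix (Fin n) (Fin n) ℂ))
    (h_one : (1 : Matrix (Fin n) (Fin n) ℂ) ∈ G)
    (h_mul : ∀ g ∈ G, ∀ h ∈ G, g * h ∈ G)
    (h_unitary : ∀ g ∈ G, gᴴ * g = 1)
    (h_herm : ∀ g ∈ G, g.IsHermitian)
    (h_card : G.card = n)
    (h_tr : ∀ g ∈ G, g ≠ 1 → g.trace = 0) :
    ((n : ℂ)⁻¹ • ∑ g ∈ G, g).IsHermitian ∧
    ((n : ℂ)⁻¹ • ∑ g ∈ G, g) * ((n : ℂ)⁻¹ • ∑ g ∈ G, g)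
      = (n : ℂ)⁻¹ • ∑ g ∈ G, g ∧
    ((n : ℂ)⁻¹ • ∑ g ∈ G, g).trace = 1 ∧
    (∃ u : Fin n → ℂ, star u ⬝ᵥ u = 1 ∧
      (n : ℂ)⁻¹ • ∑ g ∈ G, g = Matrix.vecMulVec u (star u)) ∧
    (∀ g ∈ G, (g * ((n : ℂ)⁻¹ • ∑ g' ∈ G, g')).trace = 1) :=
  stmt13_general n G h_one h_mul h_unitary h_herm h_card h_tr
end

section
/- Let n ≥ 1 and let G be a finite subgroup of the group of n × n complex unitary matrices with |G| = n, every element of G Hermitian, and every non-identity element of G traceless; put σ := (1/n) • Σ_{g ∈ G} g. Let B be a finite set of n × n Hermitian unitary matrices with the identity 1 ∈ B, |B| = n², G ⊆ B, and pairwise Hilbert–Schmidt orthogonality: trace(M * N) = 0 for all M ≠ N in B. Then trace(M * σ) = 0 for every M ∈ B \ G, and Σ_{M ∈ B, M ≠ 1} |trace(M * σ)| = n − 1. -/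
open Matrix Finset

/-! Hilbert–Schmidt orthogonality of `B` kills every term of `tr(M σ) = n⁻¹ ∑_g tr(M g)` except
`g = M`, so `tr(M σ)` vanishes off `G`, while for `M ∈ G` it is `n⁻¹ tr(M²) = n⁻¹ tr 1 = 1`.
The sum therefore counts the `n - 1` non-identity elements of `G`. -/

namespace Matrix

variable {ι R : Type*} [Fintype ι] [NonUnitalNonAssocSemiring R]
  {s : Finset (Matrix ι ι R)} {M : Matrix ι ι R}

theorem trace_mul_sum_of_notMem (hM : M ∉ s) (h : ∀ g ∈ s, g ≠ M → (M * g).trace = 0) :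
    (M * ∑ g ∈ s, g).trace = 0 := by
  rw [Matrix.mul_sum, trace_sum]
  exact sum_eq_zero fun g hg => h g hg (ne_of_mem_of_not_mem hg hM)

theorem trace_mul_sum_of_mem (hM : M ∈ s) (h : ∀ g ∈ s, g ≠ M → (M * g).trace = 0) :
    (M * ∑ g ∈ s, g).trace = (M * M).trace := by
  rw [Matrix.mul_sum, trace_sum]
  exact sum_eq_single_of_mem M hM h

end Matrix

theorem Matrix.IsHermitian.mul_self_eq_one {ι R : Type*} [Fintype ι] [DecidableEq ι]
    [Semiring R] [Star R] {M : Matrix ι ι R} (hM : M.IsHermitian) (hU : Mᴴ * M = 1) :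
    M * M = 1 := by
  rwa [hM.eq] at hU

theorem stmt14_general (n : ℕ) (hn : 1 ≤ n)
    (G : Finset (Matrix (Fin n) (Fin n) ℂ))
    (h_one : (1 : Matrix (Fin n) (Fin n) ℂ) ∈ G)
    (h_unitaryG : ∀ g ∈ G, gᴴ * g = 1)
    (h_hermG : ∀ g ∈ G, g.IsHermitian)
    (h_cardG : G.card = n)
    (B : Finset (Matrix (Fin n) (Fin n) ℂ))
    (h_sub : G ⊆ B)
    (h_orth : ∀ M ∈ B, ∀ N ∈ B, M ≠ N → (M * N).trace = 0) :
    (∀ M ∈ B, M ∉ G →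
      (M * ((n : ℂ)⁻¹ • ∑ g ∈ G, g)).trace = 0) ∧
    (∑ M ∈ B.erase 1,
        ‖(M * ((n : ℂ)⁻¹ • ∑ g ∈ G, g)).trace‖) = n - 1 := by
  have hn0 : (n : ℂ) ≠ 0 := by exact_mod_cast (Nat.one_le_iff_ne_zero.mp hn)
  have orth_G : ∀ M ∈ B, ∀ g ∈ G, g ≠ M → (M * g).trace = 0 :=
    fun M hM g hg hne => h_orth M hM g (h_sub hg) hne.symm
  have trace_σ_of_notMem : ∀ M ∈ B, M ∉ G → (M * ((n : ℂ)⁻¹ • ∑ g ∈ G, g)).trace = 0 := by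
    intro M hM hMG
    rw [Matrix.mul_smul, trace_smul, trace_mul_sum_of_notMem hMG (orth_G M hM), smul_zero]
  have trace_σ_of_mem : ∀ M ∈ G, (M * ((n : ℂ)⁻¹ • ∑ g ∈ G, g)).trace = 1 := by
    intro M hM
    rw [Matrix.mul_smul, trace_smul, trace_mul_sum_of_mem hM (orth_G M (h_sub hM)),
      (h_hermG M hM).mul_self_eq_one (h_unitaryG M hM), trace_one, Fintype.card_fin,
      smul_eq_mul, inv_mul_cancel₀ hn0]
  refine ⟨trace_σ_of_notMem, ?_⟩
  calc ∑ M ∈ B.erase 1, ‖(M * ((n : ℂ)⁻¹ • ∑ g ∈ G, g)).trace‖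
      = ∑ M ∈ G.erase 1, ‖(M * ((n : ℂ)⁻¹ • ∑ g ∈ G, g)).trace‖ := by
        refine (sum_subset (erase_subset_erase 1 h_sub) fun M hM hMG => ?_).symm
        rw [trace_σ_of_notMem M (mem_of_mem_erase hM) fun hG =>
          hMG (mem_erase.mpr ⟨ne_of_mem_erase hM, hG⟩), norm_zero]
    _ = ∑ _M ∈ G.erase 1, (1 : ℝ) :=
        sum_congr rfl fun M hM => by rw [trace_σ_of_mem M (mem_of_mem_erase hM), norm_one]
    _ = n - 1 := by
        rw [sum_const, card_erase_of_mem h_one, h_cardG, nsmul_one, Nat.cast_sub hn, Nat.cast_one]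

/-- Pauli DFE cost of a stabilizer state (Corollary 2, Table 1): for a
stabilizer state `σ = (1/n) ∑_{g ∈ G} g` and an orthogonal basis `B` of `n²`
Hermitian unitaries containing `1` and `G`, every `M ∈ B \ G` has
`tr(M σ) = 0`, and `∑_{M ∈ B, M ≠ 1} |tr(M σ)| = n − 1`. -/
theorem stmt14 (n : ℕ) (hn : 1 ≤ n)
    (G : Finset (Matrix (Fin n) (Fin n) ℂ))
    (h_one : (1 : Matrix (Fin n) (Fin n) ℂ) ∈ G)
    (h_mul : ∀ g ∈ G, ∀ h ∈ G, g * h ∈ G)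
    (h_unitaryG : ∀ g ∈ G, gᴴ * g = 1)
    (h_hermG : ∀ g ∈ G, g.IsHermitian)
    (h_cardG : G.card = n)
    (h_trG : ∀ g ∈ G, g ≠ 1 → g.trace = 0)
    (B : Finset (Matrix (Fin n) (Fin n) ℂ))
    (h_oneB : (1 : Matrix (Fin n) (Fin n) ℂ) ∈ B)
    (h_cardB : B.card = n ^ 2)
    (h_sub : G ⊆ B)
    (h_hermB : ∀ M ∈ B, M.IsHermitian)
    (h_unitaryB : ∀ M ∈ B, Mᴴ * M = 1)
    (h_orth : ∀ M ∈ B, ∀ N ∈ B, M ≠ N → (M * N).trace = 0) :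
    (∀ M ∈ B, M ∉ G →
      (M * ((n : ℂ)⁻¹ • ∑ g ∈ G, g)).trace = 0) ∧
    (∑ M ∈ B.erase 1,
        ‖(M * ((n : ℂ)⁻¹ • ∑ g ∈ G, g)).trace‖) = n - 1 :=
  stmt14_general n hn G h_one h_unitaryG h_hermG h_cardG B h_sub h_orth
end

section
/- Let λ be a real number with 0 ≤ λ ≤ 1 and set t = √(λ(1−λ)). In ℂ², let e₀, e₁ be the standard basis, φ± = √λ • e₀ ± √(1−λ) • e₁, χ± = √λ • e₀ ± i√(1−λ) • e₁, x± = (1/√2) • (e₀ ± e₁), and y± = (1/√2) • (e₀ ± i • e₁). Let ψ = √λ • (e₀ ⊗ e₀) + √(1−λ) • (e₁ ⊗ e₁) ∈ ℂ² ⊗ ℂ². Define the 4 × 4 matrices (indexed by Fin 2 × Fin 2, with ⊗ the Kronecker product of matrices): M_z = (e₀e₀*) ⊗ (e₀e₀*) + (e₁e₁*) ⊗ (e₁e₁*); M_{x1} = (x₊x₊*) ⊗ (φ₊φ₊*) + (x₋x₋*) ⊗ (φ₋φ₋*); M_{x2} = (φ₊φ₊*) ⊗ (x₊x₊*) + (φ₋φ₋*)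 ⊗ (x₋x₋*); M_{y1} = (y₊y₊*) ⊗ (χ₋χ₋*) + (y₋y₋*) ⊗ (χ₊χ₊*); M_{y2} = (χ₋χ₋*) ⊗ (y₊y₊*) + (χ₊χ₊*) ⊗ (y₋y₋*). Then (1/6) • (2 • M_z + M_{x1} + M_{x2} + M_{y1} + M_{y2}) = (1/3) • (2 • (ψψ*) + 1), where 1 is the 4 × 4 identity matrix and ψψ* is the outer-product projector onto ψ. -/
/-!
With `ρ = diag(λ, 1 - λ)` (the reduced state of `ψ` on either qubit) and `t = √(λ(1 - λ))`,
every projector in the protocol has a short Pauli expansion: `x±x±* = (1 ± X)/2`,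
`y±y±* = (1 ± Y)/2`, `φ±φ±* = ρ ± tX` and `χ±χ±* = ρ ± tY`. Pairing `(A ± S)/2` with
`B ± T` and summing kills the cross terms, so the four two-outcome measurements average to
`1 ⊗ ρ + t X ⊗ X`, `ρ ⊗ 1 + t X ⊗ X`, `1 ⊗ ρ - t Y ⊗ Y` and `ρ ⊗ 1 - t Y ⊗ Y`; the sign of
the `Y` terms comes from pairing `y₊` with `χ₋`. Since `X ⊗ X - Y ⊗ Y = 2(|00⟩⟨11| + |11⟩⟨00|)`,
comparing with `ψψ*` entrywise only uses `λ + (1 - λ) = 1`.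
-/

open Matrix
open scoped Kronecker

section KroneckerPairs

variable {l m n p : Type*}

theorem add_kronecker_add_add_sub_kronecker_sub {R : Type*} [CommRing R]
    (A S : Matrix l m R) (B T : Matrix n p R) :
    (A + S) ⊗ₖ (B + T) + (A - S) ⊗ₖ (B - T) = (2 : R) • (A ⊗ₖ B + S ⊗ₖ T) := by
  ext i j
  simp only [Matrix.add_apply, Matrix.sub_apply, Matrix.smul_apply, kroneckerMap_apply,
    smul_eq_mul]
  ring

theorem kronecker_neg {R : Type*} [Ring R] (A : Matrix l m R) (B : Matrix n p R) :
    A ⊗ₖ (-B) = -(A ⊗ₖ B) := by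
  ext i j
  simp [kroneckerMap_apply]

theorem neg_kronecker {R : Type*} [Ring R] (A : Matrix l m R) (B : Matrix n p R) :
    (-A) ⊗ₖ B = -(A ⊗ₖ B) := by
  ext i j
  simp [kroneckerMap_apply]

variable {K : Type*} [Field K] [NeZero (2 : K)] (A S : Matrix l m K) (B T : Matrix n p K)

theorem inv_two_smul_pm_kronecker_pm :
    ((2⁻¹ : K) • (A + S)) ⊗ₖ (B + T) + ((2⁻¹ : K) • (A - S)) ⊗ₖ (B - T) =
      A ⊗ₖ B + S ⊗ₖ T := by
  rw [smul_kronecker, smul_kronecker, ← smul_add, add_kronecker_add_add_sub_kronecker_sub,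
    smul_smul, inv_mul_cancel₀ two_ne_zero, one_smul]

theorem pm_kronecker_inv_two_smul_pm :
    (B + T) ⊗ₖ ((2⁻¹ : K) • (A + S)) + (B - T) ⊗ₖ ((2⁻¹ : K) • (A - S)) =
      B ⊗ₖ A + T ⊗ₖ S := by
  rw [kronecker_smul, kronecker_smul, ← smul_add, add_kronecker_add_add_sub_kronecker_sub,
    smul_smul, inv_mul_cancel₀ two_ne_zero, one_smul]

theorem inv_two_smul_pm_kronecker_mp :
    ((2⁻¹ : K) • (A + S)) ⊗ₖ (B - T) + ((2⁻¹ : K) • (A - S)) ⊗ₖ (B + T) =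
      A ⊗ₖ B - S ⊗ₖ T := by
  simpa [← sub_eq_add_neg, kronecker_neg, neg_kronecker] using
    inv_two_smul_pm_kronecker_pm A S B (-T)

theorem mp_kronecker_inv_two_smul_pm :
    (B - T) ⊗ₖ ((2⁻¹ : K) • (A + S)) + (B + T) ⊗ₖ ((2⁻¹ : K) • (A - S)) =
      B ⊗ₖ A - T ⊗ₖ S := by
  simpa [← sub_eq_add_neg, kronecker_neg, neg_kronecker] using
    pm_kronecker_inv_two_smul_pm A S B (-T)

end KroneckerPairs

def pauliX : Matrix (Fin 2) (Fin 2) ℂ := !![0, 1; 1, 0]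

def pauliY : Matrix (Fin 2) (Fin 2) ℂ := !![0, -Complex.I; Complex.I, 0]

theorem outerProd_cons_ofReal (a : ℝ) (z : ℂ) :
    outerProd ![(a : ℂ), z] ![(a : ℂ), z] =
      diagonal ![(a : ℂ) ^ 2, (Complex.normSq z : ℂ)] +
        ((a * z.re : ℝ) : ℂ) • pauliX + ((a * z.im : ℝ) : ℂ) • pauliY := by
  ext i j
  fin_cases i <;> fin_cases j <;>
    simp [outerProd, pauliX, pauliY, Complex.ext_iff, Complex.normSq_apply, sq, mul_comm]

theorem outerProd_equatorial (z : ℂ) (hz : Complex.normSq z = 1) :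
    outerProd ((Real.sqrt 2 : ℂ)⁻¹ • ![1, z]) ((Real.sqrt 2 : ℂ)⁻¹ • ![1, z]) =
      (2⁻¹ : ℂ) • (1 + (z.re : ℂ) • pauliX + (z.im : ℂ) • pauliY) := by
  have hv : (Real.sqrt 2 : ℂ)⁻¹ • ![1, z] =
      ![(((Real.sqrt 2)⁻¹ : ℝ) : ℂ), (((Real.sqrt 2)⁻¹ : ℝ) : ℂ) * z] := by
    simp
  have hc : (Real.sqrt 2)⁻¹ ^ 2 = (2⁻¹ : ℝ) := by rw [inv_pow, Real.sq_sqrt zero_le_two]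
  rw [hv, outerProd_cons_ofReal]
  simp only [Complex.re_ofReal_mul, Complex.im_ofReal_mul, Complex.normSq_mul,
    Complex.normSq_ofReal, hz, mul_one, ← mul_assoc, ← sq, hc, ← Complex.ofReal_pow]
  ext i j
  fin_cases i <;> fin_cases j <;> simp [pauliX, pauliY]
  · ring
  · linear_combination (2⁻¹ : ℂ) * Complex.re_add_im z

/-- LOCC DFE protocol for an arbitrary two-qubit pure state in Schmidt form
`ψ = √λ|00⟩ + √(1−λ)|11⟩`: the average of the five listed local measurement
operators equals `(2 ψψ* + I)/3`. -/
theorem stmt15 (lam : ℝ) (h0 : 0 ≤ lam) (h1 : lam ≤ 1) :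
    let sl : ℂ := (Real.sqrt lam : ℝ)
    let sm : ℂ := (Real.sqrt (1 - lam) : ℝ)
    let e0 : Fin 2 → ℂ := ![1, 0]
    let e1 : Fin 2 → ℂ := ![0, 1]
    let φp := sl • e0 + sm • e1
    let φm := sl • e0 - sm • e1
    let χp := sl • e0 + (Complex.I * sm) • e1
    let χm := sl • e0 - (Complex.I * sm) • e1
    let xp := ((Real.sqrt 2 : ℂ))⁻¹ • (e0 + e1)
    let xm := ((Real.sqrt 2 : ℂ))⁻¹ • (e0 - e1)
    let yp := ((Real.sqrt 2 : ℂ))⁻¹ • (e0 + Complex.I • e1)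
    let ym := ((Real.sqrt 2 : ℂ))⁻¹ • (e0 - Complex.I • e1)
    let ψ : Fin 2 × Fin 2 → ℂ :=
      fun p => sl * (e0 p.1 * e0 p.2) + sm * (e1 p.1 * e1 p.2)
    let Mz := outerProd e0 e0 ⊗ₖ outerProd e0 e0 + outerProd e1 e1 ⊗ₖ outerProd e1 e1
    let Mx1 := outerProd xp xp ⊗ₖ outerProd φp φp + outerProd xm xm ⊗ₖ outerProd φm φm
    let Mx2 := outerProd φp φp ⊗ₖ outerProd xp xp + outerProd φm φm ⊗ₖ outerProd xm xm
    let My1 := outerProd yp yp ⊗ₖ outerProd χm χm + outerProd ym ym ⊗ₖ outerProd χp χp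
    let My2 := outerProd χm χm ⊗ₖ outerProd yp yp + outerProd χp χp ⊗ₖ outerProd ym ym
    ((1 : ℂ) / 6) • ((2 : ℂ) • Mz + Mx1 + Mx2 + My1 + My2) =
      ((1 : ℂ) / 3) • ((2 : ℂ) • outerProd ψ ψ +
        (1 : Matrix (Fin 2 × Fin 2) (Fin 2 × Fin 2) ℂ)) := by
  intro sl sm e0 e1 φp φm χp χm xp xm yp ym ψ Mz Mx1 Mx2 My1 My2
  have hab : sl ^ 2 + sm ^ 2 = 1 := by
    simp only [sl, sm, ← Complex.ofReal_pow, Real.sq_sqrt h0, Real.sq_sqrt (sub_nonneg.2 h1)]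
    push_cast; ring
  set ρ := diagonal ![sl ^ 2, sm ^ 2]
  have hφp : outerProd φp φp = ρ + (sl * sm) • pauliX := by
    simp [φp, e0, e1, sl, sm, outerProd_cons_ofReal, ρ, sq]
  have hφm : outerProd φm φm = ρ - (sl * sm) • pauliX := by
    simp [φm, e0, e1, sl, sm, outerProd_cons_ofReal, ρ, sq, ← sub_eq_add_neg]
  have hχp : outerProd χp χp = ρ + (sl * sm) • pauliY := by
    simp [χp, e0, e1, sl, sm, outerProd_cons_ofReal, ρ, sq]
  have hχm : outerProd χm χm = ρ - (sl * sm) • pauliY := by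
    simp [χm, e0, e1, sl, sm, outerProd_cons_ofReal, ρ, sq, ← sub_eq_add_neg]
  have hxp : outerProd xp xp = (2⁻¹ : ℂ) • (1 + pauliX) := by
    simpa [xp, e0, e1] using outerProd_equatorial 1 (by simp)
  have hxm : outerProd xm xm = (2⁻¹ : ℂ) • (1 - pauliX) := by
    simpa [xm, e0, e1, ← sub_eq_add_neg] using outerProd_equatorial (-1) (by simp)
  have hyp : outerProd yp yp = (2⁻¹ : ℂ) • (1 + pauliY) := by
    simpa [yp, e0, e1] using outerProd_equatorial Complex.I (by simp)
  have hym : outerProd ym ym = (2⁻¹ : ℂ) • (1 - pauliY) := by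
    simpa [ym, e0, e1, ← sub_eq_add_neg] using outerProd_equatorial (-Complex.I) (by simp)
  have hP0 : outerProd e0 e0 = diagonal ![1, 0] := by simpa [e0] using outerProd_cons_ofReal 1 0
  have hP1 : outerProd e1 e1 = diagonal ![0, 1] := by simpa [e1] using outerProd_cons_ofReal 0 1
  have hMx1 : Mx1 = 1 ⊗ₖ ρ + pauliX ⊗ₖ ((sl * sm) • pauliX) := by
    simpa only [Mx1, hxp, hxm, hφp, hφm] using inv_two_smul_pm_kronecker_pm _ _ _ _
  have hMx2 : Mx2 = ρ ⊗ₖ 1 + ((sl * sm) • pauliX) ⊗ₖ pauliX := by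
    simpa only [Mx2, hxp, hxm, hφp, hφm] using pm_kronecker_inv_two_smul_pm _ _ _ _
  have hMy1 : My1 = 1 ⊗ₖ ρ - pauliY ⊗ₖ ((sl * sm) • pauliY) := by
    simpa only [My1, hyp, hym, hχp, hχm] using inv_two_smul_pm_kronecker_mp _ _ _ _
  have hMy2 : My2 = ρ ⊗ₖ 1 - ((sl * sm) • pauliY) ⊗ₖ pauliY := by
    simpa only [My2, hyp, hym, hχp, hχm] using mp_kronecker_inv_two_smul_pm _ _ _ _
  have hsl : star sl = sl := Complex.conj_ofReal _
  have hsm : star sm = sm := Complex.conj_ofReal _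
  simp only [Mz, hP0, hP1, hMx1, hMx2, hMy1, hMy2]
  ext ⟨i, j⟩ ⟨k, l⟩
  fin_cases i <;> fin_cases j <;> fin_cases k <;> fin_cases l <;>
    simp [ψ, e0, e1, outerProd, vecMulVec_apply, kroneckerMap_apply, ρ, pauliX, pauliY, hsl, hsm]
  all_goals grind [Complex.I_sq]
end
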